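/- arXiv:1506.07678 — 2 statements merged into one kernel-verified Lean document; each statement's English description precedes it below -/
import Mathlib

section
/- For fixed n ≥ 1 and prime power q, there exist positive constants m₁, m₂ (depending only on n and q) such that m₁ · q^{n²k} ≤ a(n,k,q) ≤ m₂ · q^{n²k} for all sufficiently large k, where a(n,k,q) is the number of simultaneous similarity classes of k-tuples of n×n matrices over F_q. -/
/-!
The classes are the orbits of `GL_n(F)` acting by simultaneous conjugation on the `q^(n²k)`
tuples. Every orbit has at most `|GL_n(F)|` elements, so the number of orbits lies between
`q^(n²k) / |GL_n(F)|` and `q^(n²k)`.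
-/

theorem Nat.card_quot_le {X : Type*} [Finite X] (r : X → X → Prop) :
    Nat.card (Quot r) ≤ Nat.card X :=
  Nat.card_le_card_of_surjective _ Quot.mk_surjective

section OrbitCount

variable {G X : Type*} [Group G] [MulAction G X] {r : X → X → Prop}

theorem equivalence_of_iff_exists_smul (hr : ∀ a b, r a b ↔ ∃ g : G, g • a = b) :
    Equivalence r where
  refl a := (hr a a).2 ⟨1, one_smul G a⟩
  symm {a b} hab := by
    obtain ⟨g, rfl⟩ := (hr a b).1 hab
    exact (hr _ a).2 ⟨g⁻¹, inv_smul_smul g a⟩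
  trans {a b c} hab hbc := by
    obtain ⟨g, rfl⟩ := (hr a b).1 hab
    obtain ⟨h, rfl⟩ := (hr _ c).1 hbc
    exact (hr a _).2 ⟨h * g, mul_smul h g a⟩

theorem card_le_card_quot_mul_card [Finite G] [Finite X]
    (hr : ∀ a b, r a b ↔ ∃ g : G, g • a = b) :
    Nat.card X ≤ Nat.card (Quot r) * Nat.card G := by
  have hsurj : Function.Surjective fun p : Quot r × G => p.2 • p.1.out := by
    intro x
    have hx : r (Quot.mk r x).out x :=
      (equivalence_of_iff_exists_smul hr).eqvGen_iff.1 (Quot.eqvGen_exact (Quot.out_eq _))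
    obtain ⟨g, hg⟩ := (hr _ x).1 hx
    exact ⟨(Quot.mk r x, g), hg⟩
  exact (Nat.card_le_card_of_surjective _ hsurj).trans (Nat.card_prod _ _).le

end OrbitCount

theorem exists_units_conj_iff_exists_conjAct_smul {M ι : Type*} [Monoid M] (A B : ι → M) :
    (∃ g : Mˣ, ∀ i, B i = g * A i * ↑g⁻¹) ↔ ∃ g : ConjAct Mˣ, g • A = B := by
  refine ConjAct.toConjAct.surjective.exists.trans ?_ |>.symm
  simp only [funext_iff, Pi.smul_apply, ConjAct.units_smul_def, ConjAct.ofConjAct_toConjAct,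
    eq_comm]

theorem card_fun_matrix (k n : ℕ) (F : Type*) [Fintype F] :
    Nat.card (Fin k → Matrix (Fin n) (Fin n) F) = Fintype.card F ^ (n ^ 2 * k) := by
  simp [Nat.card_eq_fintype_card, Matrix, pow_mul, sq]

theorem stmt4_general (n q : ℕ) (F : Type) [Field F] [Fintype F]
    (hF : Fintype.card F = q) :
    ∃ m₁ m₂ : ℝ, 0 < m₁ ∧ 0 < m₂ ∧ ∃ K : ℕ, ∀ k : ℕ, K ≤ k →
      m₁ * (q : ℝ) ^ (n ^ 2 * k) ≤
        (Nat.card (Quot (fun A B : Fin k → Matrix (Fin n) (Fin n) F =>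
          ∃ g : GL (Fin n) F, ∀ i, B i =
            (g : Matrix (Fin n) (Fin n) F) * A i *
              ((g⁻¹ : GL (Fin n) F) : Matrix (Fin n) (Fin n) F))) : ℝ) ∧
      (Nat.card (Quot (fun A B : Fin k → Matrix (Fin n) (Fin n) F =>
          ∃ g : GL (Fin n) F, ∀ i, B i =
            (g : Matrix (Fin n) (Fin n) F) * A i *
              ((g⁻¹ : GL (Fin n) F) : Matrix (Fin n) (Fin n) F))) : ℝ) ≤
        m₂ * (q : ℝ) ^ (n ^ 2 * k) := by
  have hGL : (0 : ℝ) < Nat.card (GL (Fin n) F) := by exact_mod_cast Nat.card_pos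
  refine ⟨(Nat.card (GL (Fin n) F) : ℝ)⁻¹, 1, inv_pos.2 hGL, one_pos, 0, fun k _ => ?_⟩
  have hX : (q : ℝ) ^ (n ^ 2 * k) = Nat.card (Fin k → Matrix (Fin n) (Fin n) F) := by
    rw [card_fun_matrix, hF, Nat.cast_pow]
  have : Finite (ConjAct (GL (Fin n) F)) := .of_equiv _ ConjAct.toConjAct.toEquiv
  have hlower := card_le_card_quot_mul_card (G := ConjAct (GL (Fin n) F))
    fun A B : Fin k → Matrix (Fin n) (Fin n) F => exists_units_conj_iff_exists_conjAct_smul A B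
  rw [Nat.card_congr ConjAct.ofConjAct.toEquiv] at hlower
  rw [hX, one_mul, inv_mul_le_iff₀ hGL, mul_comm]
  exact ⟨mod_cast hlower, mod_cast Nat.card_quot_le _⟩

/-- For fixed `n ≥ 1` and `q`, the number `a(n,k,q)` of simultaneous similarity
classes of `k`-tuples of `n × n` matrices over `F_q` is asymptotically
`q^(n² k)` up to constants: there exist `m₁, m₂ > 0` with
`m₁ q^(n²k) ≤ a(n,k,q) ≤ m₂ q^(n²k)` for all large `k`. -/
theorem stmt4 (n q : ℕ) (hn : 1 ≤ n) (F : Type) [Field F] [Fintype F]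
    (hF : Fintype.card F = q) :
    ∃ m₁ m₂ : ℝ, 0 < m₁ ∧ 0 < m₂ ∧ ∃ K : ℕ, ∀ k : ℕ, K ≤ k →
      m₁ * (q : ℝ) ^ (n ^ 2 * k) ≤
        (Nat.card (Quot (fun A B : Fin k → Matrix (Fin n) (Fin n) F =>
          ∃ g : GL (Fin n) F, ∀ i, B i =
            (g : Matrix (Fin n) (Fin n) F) * A i *
              ((g⁻¹ : GL (Fin n) F) : Matrix (Fin n) (Fin n) F))) : ℝ) ∧
      (Nat.card (Quot (fun A B : Fin k → Matrix (Fin n) (Fin n) F =>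
          ∃ g : GL (Fin n) F, ∀ i, B i =
            (g : Matrix (Fin n) (Fin n) F) * A i *
              ((g⁻¹ : GL (Fin n) F) : Matrix (Fin n) (Fin n) F))) : ℝ) ≤
        m₂ * (q : ℝ) ^ (n ^ 2 * k) :=
  stmt4_general n q F hF
end

section
/- Let n = 2l be even and define A₁ = [[0,I_l],[0,0]] (block form with l×l blocks) and, for 2 ≤ i ≤ l+1, A_i = [[0,N_i],[0,0]] where N_i is the l×l matrix whose only nonzero row is the last row, equal to the standard basis row vector e_{i-1}. Then the matrices A₁,...,A_{l+1} pairwise commute, and their common centralizer in M_n(F_q) is {a₀·I_n + [[0,B],[0,0]] : a₀ ∈ F_q, B ∈ M_l(F_q)}, a commutative subalgebra of dimension l² + 1. -/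
/-!
A block matrix `[[P, Q], [R, S]]` commutes with `[[0, N], [0, 0]]` exactly when `N R = 0`,
`N S = P N` and `R N = 0`. For `N = 1` this forces `R = 0` and `S = P`; for `N = E_{i j}` with one
fixed row `i` and every column `j` it forces `P` to be scalar. So the centralizer consists of the
matrices `a • 1 + [[0, B], [0, 0]]`; these commute pairwise because the strictly block upper
triangular parts multiply to zero, and `(a, B)` parametrises them linearly and injectively.
-/

open Matrix

namespace Matrix

variable {n m α : Type*}

section Mul

variable [Fintype n] [Fintype m] [Semiring α]

theorem fromBlocks_upperRight_mul_upperRight (B C : Matrix n m α) :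
    (fromBlocks 0 B 0 0 : Matrix (n ⊕ m) (n ⊕ m) α) * fromBlocks 0 C 0 0 = 0 := by
  simp [fromBlocks_multiply]

theorem commute_fromBlocks_upperRight (B C : Matrix n m α) :
    Commute (fromBlocks 0 B 0 0 : Matrix (n ⊕ m) (n ⊕ m) α) (fromBlocks 0 C 0 0) := by
  rw [Commute, SemiconjBy, fromBlocks_upperRight_mul_upperRight,
    fromBlocks_upperRight_mul_upperRight]

theorem commute_fromBlocks_upperRight_iff (N : Matrix n m α) (P : Matrix n n α)
    (Q : Matrix n m α) (R : Matrix m n α) (S : Matrix m m α) :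
    Commute (fromBlocks 0 N 0 0) (fromBlocks P Q R S) ↔
      N * R = 0 ∧ N * S = P * N ∧ R * N = 0 := by
  simp [Commute, SemiconjBy, fromBlocks_multiply, fromBlocks_inj, eq_comm]

theorem eq_smul_one_of_forall_commute_single [DecidableEq n] {i : n} {M : Matrix n n α}
    (hM : ∀ j, Commute (single i j 1) M) : M = M i i • (1 : Matrix n n α) := by
  ext j k
  obtain rfl | hjk := eq_or_ne j k
  · simp [diag_eq_of_commute_single (hM j)]
  · simp [row_eq_zero_of_commute_single (hM j) hjk.symm, one_apply_ne hjk]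

end Mul

variable [DecidableEq n] [DecidableEq m] [CommSemiring α]

theorem smul_one_add_fromBlocks_upperRight (a : α) (B : Matrix n m α) :
    (a • 1 + fromBlocks 0 B 0 0 : Matrix (n ⊕ m) (n ⊕ m) α) =
      fromBlocks (a • 1) B 0 (a • 1) := by
  rw [← fromBlocks_one, fromBlocks_smul, fromBlocks_add]
  simp

theorem commute_smul_one_add_fromBlocks_upperRight [Fintype n] [Fintype m] (a : α)
    (B N : Matrix n m α) :
    Commute (a • 1 + fromBlocks 0 B 0 0 : Matrix (n ⊕ m) (n ⊕ m) α) (fromBlocks 0 N 0 0) :=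
  ((Commute.one_left _).smul_left a).add_left (commute_fromBlocks_upperRight B N)

theorem commute_smul_one_add_fromBlocks_upperRight_smul_one_add [Fintype n] [Fintype m]
    (a b : α) (B C : Matrix n m α) :
    Commute (a • 1 + fromBlocks 0 B 0 0 : Matrix (n ⊕ m) (n ⊕ m) α)
      (b • 1 + fromBlocks 0 C 0 0) :=
  ((Commute.one_right _).smul_right b).add_right
    (commute_smul_one_add_fromBlocks_upperRight a B C)

theorem commute_fromBlocks_one_and_single_iff [Fintype n] {i : n}
    {x : Matrix (n ⊕ n) (n ⊕ n) α} :
    (Commute (fromBlocks 0 1 0 0) x ∧ ∀ j, Commute (fromBlocks 0 (single i j 1) 0 0) x) ↔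
      ∃ (a : α) (B : Matrix n n α), x = a • 1 + fromBlocks 0 B 0 0 := by
  constructor
  · obtain ⟨P, Q, R, S, rfl⟩ : ∃ P Q R S, x = fromBlocks P Q R S :=
      ⟨_, _, _, _, (fromBlocks_toBlocks x).symm⟩
    rintro ⟨hone, hsingle⟩
    obtain ⟨rfl, rfl, -⟩ : R = 0 ∧ S = P ∧ R = 0 := by
      simpa using (commute_fromBlocks_upperRight_iff _ _ _ _ _).1 hone
    have hS : S = S i i • 1 := eq_smul_one_of_forall_commute_single fun j =>
      ((commute_fromBlocks_upperRight_iff _ _ _ _ _).1 (hsingle j)).2.1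
    exact ⟨S i i, Q, by rw [smul_one_add_fromBlocks_upperRight, ← hS]⟩
  · rintro ⟨a, B, rfl⟩
    exact ⟨(commute_smul_one_add_fromBlocks_upperRight a B 1).symm,
      fun j => (commute_smul_one_add_fromBlocks_upperRight a B _).symm⟩

section Parametrisation

variable (n m α)

def scalarAddUpperRight : α × Matrix n m α →ₗ[α] Matrix (n ⊕ m) (n ⊕ m) α where
  toFun z := z.1 • 1 + fromBlocks 0 z.2 0 0
  map_add' z w := by
    rw [Prod.fst_add, Prod.snd_add, add_smul, add_add_add_comm, fromBlocks_add]
    simp only [add_zero]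
  map_smul' c z := by
    simp [mul_smul, smul_add, fromBlocks_smul]

theorem range_scalarAddUpperRight :
    Set.range (scalarAddUpperRight n m α) =
      {x | ∃ (a : α) (B : Matrix n m α), x = a • 1 + fromBlocks 0 B 0 0} := by
  ext x
  simp [scalarAddUpperRight, eq_comm]

theorem scalarAddUpperRight_injective [Nonempty n] :
    Function.Injective (scalarAddUpperRight n m α) := by
  rintro ⟨a, B⟩ ⟨b, C⟩ h
  obtain ⟨i⟩ := ‹Nonempty n›
  have h' : fromBlocks (a • 1) B 0 (a • 1 : Matrix m m α) =
      fromBlocks (b • 1 : Matrix n n α) C 0 (b • 1 : Matrix m m α) := by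
    simpa only [scalarAddUpperRight, LinearMap.coe_mk, AddHom.coe_mk,
      smul_one_add_fromBlocks_upperRight] using h
  obtain ⟨hab, rfl, -, -⟩ := fromBlocks_inj.1 h'
  have : a = b := by simpa using congr_fun (congr_fun hab i) i
  rw [this]

end Parametrisation

theorem finrank_subalgebra_eq_of_coe_eq_smul_one_add_fromBlocks {K : Type*} [Field K]
    [Fintype n] [Fintype m] [Nonempty n] {S : Subalgebra K (Matrix (n ⊕ m) (n ⊕ m) K)}
    (hS : (S : Set (Matrix (n ⊕ m) (n ⊕ m) K)) =
      {x | ∃ (a : K) (B : Matrix n m K), x = a • 1 + fromBlocks 0 B 0 0}) :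
    Module.finrank K S = Fintype.card n * Fintype.card m + 1 := by
  have hrange : Subalgebra.toSubmodule S = LinearMap.range (scalarAddUpperRight n m K) :=
    SetLike.coe_injective <| by rw [LinearMap.coe_range, range_scalarAddUpperRight]; exact hS
  rw [← Subalgebra.finrank_toSubmodule, hrange,
    LinearMap.finrank_range_of_inj (scalarAddUpperRight_injective _ _ _), Module.finrank_prod,
    Module.finrank_matrix, Module.finrank_self, mul_one, add_comm]

end Matrix

theorem stmt5_general (l : ℕ) (hl : 0 < l) (F : Type) [Field F]
    (A : Fin (l + 1) → Matrix (Fin l ⊕ Fin l) (Fin l ⊕ Fin l) F)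
    (hA0 : A 0 = Matrix.fromBlocks 0 (1 : Matrix (Fin l) (Fin l) F) 0 0)
    (hAs : ∀ j : Fin l, A j.succ = Matrix.fromBlocks 0
      (fun r c : Fin l => if r.val = l - 1 ∧ c = j then (1 : F) else 0) 0 0) :
    (∀ i j, Commute (A i) (A j)) ∧
    (Subalgebra.centralizer F (Set.range A) :
        Set (Matrix (Fin l ⊕ Fin l) (Fin l ⊕ Fin l) F)) =
      {x | ∃ (a₀ : F) (B : Matrix (Fin l) (Fin l) F),
        x = a₀ • (1 : Matrix (Fin l ⊕ Fin l) (Fin l ⊕ Fin l) F) +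
          Matrix.fromBlocks 0 B 0 0} ∧
    (∀ x ∈ Subalgebra.centralizer F (Set.range A),
      ∀ y ∈ Subalgebra.centralizer F (Set.range A), x * y = y * x) ∧
    Module.finrank F (Subalgebra.centralizer F (Set.range A) :
      Subalgebra F (Matrix (Fin l ⊕ Fin l) (Fin l ⊕ Fin l) F)) = l ^ 2 + 1 := by
  let last : Fin l := ⟨l - 1, by omega⟩
  have hsingle : ∀ j : Fin l,
      (fun r c : Fin l => if r.val = l - 1 ∧ c = j then (1 : F) else 0) = single last j 1 := by
    intro j
    ext r c
    simp [single, last, Fin.ext_iff, eq_comm]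
  have hcent : (Subalgebra.centralizer F (Set.range A) :
        Set (Matrix (Fin l ⊕ Fin l) (Fin l ⊕ Fin l) F)) =
      {x | ∃ (a₀ : F) (B : Matrix (Fin l) (Fin l) F), x = a₀ • 1 + fromBlocks 0 B 0 0} := by
    ext x
    simp only [SetLike.mem_coe, Subalgebra.mem_centralizer_iff, Set.forall_mem_range,
      Fin.forall_fin_succ, hA0, hAs, hsingle]
    exact commute_fromBlocks_one_and_single_iff
  refine ⟨?_, hcent, ?_, ?_⟩
  · have hupper : ∀ i, ∃ N, A i = fromBlocks 0 N 0 0 :=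
      Fin.cases ⟨1, hA0⟩ fun j => ⟨_, hAs j⟩
    intro i j
    obtain ⟨N, hN⟩ := hupper i
    obtain ⟨M, hM⟩ := hupper j
    rw [hN, hM]
    exact commute_fromBlocks_upperRight N M
  · intro x hx y hy
    rw [← SetLike.mem_coe, hcent] at hx hy
    obtain ⟨a, B, rfl⟩ := hx
    obtain ⟨b, C, rfl⟩ := hy
    exact (commute_smul_one_add_fromBlocks_upperRight_smul_one_add a b B C).eq
  · have : Nonempty (Fin l) := ⟨last⟩
    rw [finrank_subalgebra_eq_of_coe_eq_smul_one_add_fromBlocks hcent, Fintype.card_fin, sq]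

/-- Even case `n = 2l`: the explicit commuting tuple `(A₁, …, A_{l+1})` has
common centralizer `{a₀·I + [[0,B],[0,0]]}`, a commutative subalgebra of
dimension `l² + 1`. -/
theorem stmt5 (l q : ℕ) (hl : 0 < l) (F : Type) [Field F] [Fintype F]
    (hF : Fintype.card F = q)
    (A : Fin (l + 1) → Matrix (Fin l ⊕ Fin l) (Fin l ⊕ Fin l) F)
    (hA0 : A 0 = Matrix.fromBlocks 0 (1 : Matrix (Fin l) (Fin l) F) 0 0)
    (hAs : ∀ j : Fin l, A j.succ = Matrix.fromBlocks 0
      (fun r c : Fin l => if r.val = l - 1 ∧ c = j then (1 : F) else 0) 0 0) :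
    (∀ i j, Commute (A i) (A j)) ∧
    (Subalgebra.centralizer F (Set.range A) :
        Set (Matrix (Fin l ⊕ Fin l) (Fin l ⊕ Fin l) F)) =
      {x | ∃ (a₀ : F) (B : Matrix (Fin l) (Fin l) F),
        x = a₀ • (1 : Matrix (Fin l ⊕ Fin l) (Fin l ⊕ Fin l) F) +
          Matrix.fromBlocks 0 B 0 0} ∧
    (∀ x ∈ Subalgebra.centralizer F (Set.range A),
      ∀ y ∈ Subalgebra.centralizer F (Set.range A), x * y = y * x) ∧
    Module.finrank F (Subalgebra.centralizer F (Set.range A) :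
      Subalgebra F (Matrix (Fin l ⊕ Fin l) (Fin l ⊕ Fin l) F)) = l ^ 2 + 1 :=
  stmt5_general l hl F A hA0 hAs
end
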